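/- arXiv:2305.01571 — 3 statements merged into one kernel-verified Lean document; each statement's English description precedes it below -/
import Mathlib

section
/- Let V be a finite-dimensional real vector space and C ⊆ V a polyhedral convex cone. Then the following are equivalent: (1) every linear functional l : V → ℝ that is nonnegative on C vanishes identically on C; (2) 0 lies in the relative interior of C. -/
/-!
A finitely generated cone is closed: by Carathéodory's theorem for cones it is a finite union of
cones over linearly independent sets, each the image of a closed orthant under an injective linear
map. So Farkas' lemma applies: if `-v ∉ C` for a generator `v`, some functional is nonnegative on
`C` and negative at `-v`, hence nonzero at `v ∈ C`. Thus if every functional nonnegative on `C`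
vanishes on `C`, then `C` contains the negatives of its generators and is the linear span of `s`,
whose intrinsic interior is all of it. Conversely, if `0` is in the relative interior, each
`x ∈ C` has a multiple `t • x ∈ C` with `t < 0`, and `l x ≥ 0`, `t * l x ≥ 0` force `l x = 0`.
-/

/-- The polyhedral convex cone generated by a finite set `s`: all nonnegative
real combinations of the elements of `s`. -/
def coneOf {V : Type*} [AddCommGroup V] [Module ℝ V] (s : Finset V) : Set V :=
  {x | ∃ f : V → ℝ, (∀ v, 0 ≤ f v) ∧ x = ∑ v ∈ s, f v • v}

open Filter Topology Set

theorem AffineSubspace.intrinsicInterior_coe {𝕜 V P : Type*} [Ring 𝕜] [AddCommGroup V]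
    [Module 𝕜 V] [TopologicalSpace P] [AddTorsor V P] (A : AffineSubspace 𝕜 P) :
    intrinsicInterior 𝕜 (A : Set P) = A := by
  have h : ((↑) ⁻¹' (A : Set P) : Set (affineSpan 𝕜 (A : Set P))) = univ :=
    eq_univ_of_forall fun y => by
      simpa only [AffineSubspace.affineSpan_coe, mem_preimage, SetLike.mem_coe] using y.2
  rw [intrinsicInterior, h, interior_univ, image_univ, Subtype.range_coe,
    AffineSubspace.affineSpan_coe]

section IntrinsicInterior

variable {V : Type*} [AddCommGroup V] [TopologicalSpace V] [IsTopologicalAddGroup V]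
  [Module ℝ V] [ContinuousSMul ℝ V]

theorem eventually_lineMap_mem_of_mem_intrinsicInterior {s : Set V} {a x : V}
    (ha : a ∈ intrinsicInterior ℝ s) (hx : x ∈ affineSpan ℝ s) :
    ∀ᶠ t in 𝓝 (0 : ℝ), AffineMap.lineMap a x t ∈ s := by
  obtain ⟨b, hb, rfl⟩ := ha
  let γ : ℝ → affineSpan ℝ s := fun t =>
    ⟨AffineMap.lineMap (b : V) x t, AffineMap.lineMap_mem t b.2 hx⟩
  have hγ : Continuous γ := AffineMap.lineMap_continuous.subtype_mk _
  have hγ0 : γ 0 = b := Subtype.ext (AffineMap.lineMap_apply_zero _ _)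
  have hγ_mem := hγ.continuousAt.preimage_mem_nhds (hγ0 ▸ isOpen_interior.mem_nhds hb)
  exact mem_of_superset hγ_mem fun t ht =>
    interior_subset (s := ((↑) ⁻¹' s : Set (affineSpan ℝ s))) ht

theorem exists_neg_smul_mem_of_zero_mem_intrinsicInterior {s : Set V}
    (h0 : (0 : V) ∈ intrinsicInterior ℝ s) {x : V} (hx : x ∈ s) : ∃ t : ℝ, t < 0 ∧ t • x ∈ s := by
  obtain ⟨t, htx, ht⟩ := (((eventually_lineMap_mem_of_mem_intrinsicInterior h0
    (subset_affineSpan ℝ _ hx)).filter_mono nhdsWithin_le_nhds).and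
    (self_mem_nhdsWithin (s := Iio (0 : ℝ)))).exists
  rw [AffineMap.lineMap_apply_module', sub_zero, add_zero] at htx
  exact ⟨t, ht, htx⟩

end IntrinsicInterior

section Algebraic

variable {V : Type*} [AddCommGroup V] [Module ℝ V]

theorem coneOf_eq_hull (s : Finset V) : coneOf s = PointedCone.hull ℝ (s : Set V) := by
  ext x
  constructor
  · rintro ⟨f, hf, rfl⟩
    exact Submodule.sum_mem _ fun v hv =>
      Submodule.smul_mem _ (⟨f v, hf v⟩ : NNReal) (Submodule.subset_span hv)
  · intro hx
    obtain ⟨f, -, rfl⟩ := Submodule.mem_span_finset.mp hx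
    exact ⟨fun v => f v, fun v => (f v).2, rfl⟩

theorem coneOf_mono {s t : Finset V} (h : s ⊆ t) : coneOf s ⊆ coneOf t := by
  rw [coneOf_eq_hull, coneOf_eq_hull]
  exact Submodule.span_mono (Finset.coe_subset.mpr h)

theorem coneOf_eq_span_of_neg_mem {s : Finset V} (h : ∀ v ∈ s, -v ∈ coneOf s) :
    coneOf s = Submodule.span ℝ (s : Set V) := by
  rw [coneOf_eq_hull] at h ⊢
  refine le_antisymm (PointedCone.hull_le_span ℝ _) ?_
  have hspan : Submodule.span ℝ (s : Set V) ≤ (PointedCone.hull ℝ (s : Set V)).lineal :=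
    Submodule.span_le.mpr fun v hv =>
      PointedCone.mem_lineal.mpr ⟨PointedCone.subset_hull hv, h v hv⟩
  exact fun x hx => PointedCone.lineal_le _ (hspan hx)

theorem exists_mem_coneOf_erase_of_sum_smul_eq_zero [DecidableEq V] {t : Finset V} {g : V → ℝ}
    (hg : ∑ v ∈ t, g v • v = 0) {w : V} (hw : w ∈ t) (hgw : 0 < g w) {x : V}
    (hx : x ∈ coneOf t) : ∃ w₀ ∈ t, x ∈ coneOf (t.erase w₀) := by
  obtain ⟨f, hf, rfl⟩ := hx
  -- Subtract from `f` the largest multiple `r • g` keeping all coefficients nonnegative;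
  -- the coefficient at a minimiser `w₀` of `f / g` over `{g > 0}` drops to zero.
  obtain ⟨w₀, hw₀, hmin⟩ := Finset.exists_min_image (t.filter fun v => 0 < g v)
    (fun v => f v / g v) ⟨w, Finset.mem_filter.mpr ⟨hw, hgw⟩⟩
  rw [Finset.mem_filter] at hw₀
  set r := f w₀ / g w₀
  have hr : 0 ≤ r := div_nonneg (hf w₀) hw₀.2.le
  have hle : ∀ v ∈ t, r * g v ≤ f v := by
    intro v hv
    rcases lt_or_ge 0 (g v) with hgv | hgv
    · exact (le_div_iff₀ hgv).mp (hmin v (Finset.mem_filter.mpr ⟨hv, hgv⟩))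
    · exact (mul_nonpos_of_nonneg_of_nonpos hr hgv).trans (hf v)
  refine ⟨w₀, hw₀.1, fun v => max (f v - r * g v) 0, fun v => le_max_right _ _, ?_⟩
  have hw₀_zero : max (f w₀ - r * g w₀) 0 • w₀ = 0 := by
    rw [div_mul_cancel₀ _ hw₀.2.ne', sub_self, max_self, zero_smul]
  rw [Finset.sum_erase (f := fun v => max (f v - r * g v) 0 • v) t hw₀_zero]
  calc ∑ v ∈ t, f v • v = ∑ v ∈ t, f v • v - r • ∑ v ∈ t, g v • v := by
        rw [hg, smul_zero, sub_zero]
    _ = ∑ v ∈ t, (f v - r * g v) • v := by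
      simp only [Finset.smul_sum, smul_smul, ← Finset.sum_sub_distrib, sub_smul]
    _ = _ := Finset.sum_congr rfl fun v hv => by rw [max_eq_left (sub_nonneg.mpr (hle v hv))]

theorem exists_linearIndepOn_subset_mem_coneOf (t : Finset V) {x : V} (hx : x ∈ coneOf t) :
    ∃ u ⊆ t, LinearIndepOn ℝ id (u : Set V) ∧ x ∈ coneOf u := by
  classical
  induction t using Finset.strongInduction generalizing x with
  | H t ih =>
  by_cases hli : LinearIndepOn ℝ id (t : Set V)
  · exact ⟨t, subset_rfl, hli, hx⟩
  obtain ⟨g, hg, w, hw, hgw⟩ := not_linearIndepOn_finset_iff.mp hli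
  obtain ⟨w₀, hw₀, hx'⟩ : ∃ w₀ ∈ t, x ∈ coneOf (t.erase w₀) := by
    rcases hgw.lt_or_gt with hneg | hpos
    · refine exists_mem_coneOf_erase_of_sum_smul_eq_zero (g := -g) ?_ hw (by simpa using hneg) hx
      simpa [neg_smul, Finset.sum_neg_distrib] using hg
    · exact exists_mem_coneOf_erase_of_sum_smul_eq_zero hg hw hpos hx
  obtain ⟨u, hu, hli', hxu⟩ := ih _ (Finset.erase_ssubset hw₀) hx'
  exact ⟨u, hu.trans (Finset.erase_subset _ _), hli', hxu⟩

end Algebraic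

section Topological

variable {V : Type*} [AddCommGroup V] [Module ℝ V] [TopologicalSpace V] [IsTopologicalAddGroup V]
  [ContinuousSMul ℝ V] [T2Space V]

theorem isClosed_coneOf_of_linearIndepOn {u : Finset V} (hu : LinearIndepOn ℝ id (u : Set V)) :
    IsClosed (coneOf u) := by
  classical
  let L := Fintype.linearCombination ℝ ((↑) : u → V)
  have hL : coneOf u = L '' Ici 0 := by
    ext x
    constructor
    · rintro ⟨f, hf, rfl⟩
      exact ⟨fun i => f i, fun i => hf i, Finset.sum_coe_sort u fun v => f v • v⟩
    · rintro ⟨c, hc, rfl⟩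
      refine ⟨fun v => if h : v ∈ u then c ⟨v, h⟩ else 0, fun v => ?_, ?_⟩
      · dsimp only
        split_ifs
        exacts [hc _, le_rfl]
      · rw [Fintype.linearCombination_apply, ← Finset.sum_coe_sort u]
        exact Finset.sum_congr rfl fun i _ => by simp only [dif_pos i.2]
  rw [hL]
  exact (LinearMap.isClosedEmbedding_of_injective (LinearMap.ker_eq_bot.mpr
    hu.fintypeLinearCombination_injective)).isClosedMap _ isClosed_Ici

theorem isClosed_coneOf (s : Finset V) : IsClosed (coneOf s) := by
  classical
  have hunion : coneOf s = ⋃ (u : Finset V)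
      (_ : u ∈ s.powerset.filter fun u : Finset V => LinearIndepOn ℝ id (u : Set V)), coneOf u := by
    refine Subset.antisymm (fun x hx => ?_) (iUnion₂_subset fun u hu => ?_)
    · obtain ⟨u, hus, hu, hxu⟩ := exists_linearIndepOn_subset_mem_coneOf s hx
      exact mem_iUnion₂.mpr ⟨u, Finset.mem_filter.mpr ⟨Finset.mem_powerset.mpr hus, hu⟩, hxu⟩
    · exact coneOf_mono (Finset.mem_powerset.mp (Finset.mem_filter.mp hu).1)
  rw [hunion]
  exact isClosed_biUnion_finset fun u hu =>
    isClosed_coneOf_of_linearIndepOn (Finset.mem_filter.mp hu).2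

theorem exists_nonneg_on_coneOf_of_notMem [LocallyConvexSpace ℝ V] {s : Finset V} {x : V}
    (hx : x ∉ coneOf s) : ∃ f : StrongDual ℝ V, (∀ y ∈ coneOf s, 0 ≤ f y) ∧ f x < 0 := by
  rw [coneOf_eq_hull] at hx ⊢
  exact ProperCone.hyperplane_separation_point
    ⟨PointedCone.hull ℝ (s : Set V), (coneOf_eq_hull s ▸ isClosed_coneOf s :
      IsClosed (PointedCone.hull ℝ (s : Set V) : Set V))⟩ hx

end Topological

theorem forall_nonneg_functional_vanishes_iff_zero_mem_relint_general
    (V : Type*) [NormedAddCommGroup V] [NormedSpace ℝ V]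
    (s : Finset V) (C : Set V) (hC : C = coneOf s) :
    (∀ l : V →ₗ[ℝ] ℝ, (∀ x ∈ C, 0 ≤ l x) → ∀ x ∈ C, l x = 0) ↔
      (0 : V) ∈ intrinsicInterior ℝ C := by
  subst hC
  constructor
  · intro H
    have hneg : ∀ v ∈ s, -v ∈ coneOf s := fun v hv => by
      by_contra hv'
      obtain ⟨f, hf, hfv⟩ := exists_nonneg_on_coneOf_of_notMem hv'
      have hfv_zero : f v = 0 := H f hf v (coneOf_eq_hull s ▸ PointedCone.subset_hull hv)
      simp [hfv_zero] at hfv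
    rw [coneOf_eq_span_of_neg_mem hneg]
    exact (AffineSubspace.intrinsicInterior_coe (Submodule.span ℝ (s : Set V)).toAffineSubspace).ge
      (Submodule.zero_mem _)
  · intro h0 l hl x hx
    obtain ⟨t, ht, htx⟩ := exists_neg_smul_mem_of_zero_mem_intrinsicInterior h0 hx
    have htlx : 0 ≤ t * l x := by simpa using hl _ htx
    exact le_antisymm (nonpos_of_mul_nonneg_right htlx ht) (hl x hx)

/-- For a polyhedral convex cone `C` in a finite-dimensional real
vector space, every linear functional nonnegative on `C` vanishes on `C` iff
`0` lies in the relative interior of `C`. -/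
theorem forall_nonneg_functional_vanishes_iff_zero_mem_relint
    (V : Type*) [NormedAddCommGroup V] [NormedSpace ℝ V] [FiniteDimensional ℝ V]
    (s : Finset V) (C : Set V) (hC : C = coneOf s) :
    (∀ l : V →ₗ[ℝ] ℝ, (∀ x ∈ C, 0 ≤ l x) → ∀ x ∈ C, l x = 0) ↔
      (0 : V) ∈ intrinsicInterior ℝ C :=
  forall_nonneg_functional_vanishes_iff_zero_mem_relint_general V s C hC
end

section
/- Let β : V → W be a linear map of finite-dimensional real vector spaces and let τ ⊆ V be a polyhedral convex cone. Then 0 lies in the relative interior of β(τ) if and only if τ ∩ ker(β) is not contained in any proper face of τ. -/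
/-- `F` is a face of the cone `τ`: `F = τ ∩ ker l` for some linear functional `l`
nonnegative on `τ`. -/
def IsFaceOf {V : Type*} [AddCommGroup V] [Module ℝ V] (F τ : Set V) : Prop :=
  ∃ l : V →ₗ[ℝ] ℝ, (∀ x ∈ τ, 0 ≤ l x) ∧ F = τ ∩ {x | l x = 0}

section Aux

variable {V : Type*} [AddCommGroup V] [Module ℝ V]
variable {W : Type*} [AddCommGroup W] [Module ℝ W]

/-- The cone generated by the family `g v`, `v ∈ s`. -/
def fgCone (s : Finset V) (g : V → W) : Set W :=
  {y | ∃ f : V → ℝ, (∀ v, 0 ≤ f v) ∧ y = ∑ v ∈ s, f v • g v}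

lemma coneOf_eq_fgCone (s : Finset V) : coneOf s = fgCone s id := rfl

lemma zero_mem_fgCone (s : Finset V) (g : V → W) : (0 : W) ∈ fgCone s g :=
  ⟨0, fun _ => le_refl 0, by simp⟩

lemma add_mem_fgCone {s : Finset V} {g : V → W} {x y : W}
    (hx : x ∈ fgCone s g) (hy : y ∈ fgCone s g) : x + y ∈ fgCone s g := by
  obtain ⟨f, hf, rfl⟩ := hx
  obtain ⟨f', hf', rfl⟩ := hy
  exact ⟨f + f', fun v => add_nonneg (hf v) (hf' v), by
    simp [add_smul, Finset.sum_add_distrib]⟩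

lemma smul_mem_fgCone {s : Finset V} {g : V → W} {x : W} {c : ℝ} (hc : 0 ≤ c)
    (hx : x ∈ fgCone s g) : c • x ∈ fgCone s g := by
  obtain ⟨f, hf, rfl⟩ := hx
  exact ⟨fun v => c * f v, fun v => mul_nonneg hc (hf v), by
    simp [Finset.smul_sum, mul_smul]⟩

lemma convex_fgCone (s : Finset V) (g : V → W) : Convex ℝ (fgCone s g) := by
  intro x hx y hy a b ha hb _
  exact add_mem_fgCone (smul_mem_fgCone ha hx) (smul_mem_fgCone hb hy)

lemma fgCone_mono {s t : Finset V} (hts : t ⊆ s) (g : V → W) :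
    fgCone t g ⊆ fgCone s g := by
  classical
  rintro y ⟨f, hf, rfl⟩
  refine ⟨fun v => if v ∈ t then f v else 0,
    fun v => by by_cases h : v ∈ t <;> simp [h, hf v], ?_⟩
  rw [← Finset.sum_subset hts (fun v _ hv => by simp [hv])]
  exact Finset.sum_congr rfl fun v hv => by simp [hv]

lemma image_coneOf (s : Finset V) (β : V →ₗ[ℝ] W) :
    β '' coneOf s = fgCone s β := by
  ext y
  constructor
  · rintro ⟨x, ⟨f, hf, rfl⟩, rfl⟩
    exact ⟨f, hf, by simp [map_sum]⟩
  · rintro ⟨f, hf, rfl⟩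
    exact ⟨∑ v ∈ s, f v • v, ⟨f, hf, rfl⟩, by simp [map_sum]⟩

/-- Carathéodory for finitely generated cones. -/
lemma fgCone_caratheodory (s : Finset V) (g : V → W) :
    ∀ x ∈ fgCone s g, ∃ t ⊆ s,
      LinearIndependent ℝ (fun v : t => g v) ∧ x ∈ fgCone t g := by
  classical
  induction s using Finset.strongInductionOn with
  | _ s ih =>
    intro x hx
    by_cases hli : LinearIndependent ℝ (fun v : s => g v)
    · exact ⟨s, le_refl _, hli, hx⟩
    obtain ⟨c, hc0, i₀, hci₀⟩ := Fintype.not_linearIndependent_iff.1 hli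
    obtain ⟨f, hf, rfl⟩ := hx
    -- get a relation with some positive coefficient
    obtain ⟨d, hd0, i₁, hdi₁⟩ :
        ∃ d : s → ℝ, (∑ i, d i • g i = 0) ∧ ∃ i : s, 0 < d i := by
      rcases lt_trichotomy (c i₀) 0 with h | h | h
      · refine ⟨-c, ?_, i₀, by simpa using h⟩
        have hs : ∑ i, (-c) i • g (i : V) = -∑ i, c i • g (i : V) := by
          rw [← Finset.sum_neg_distrib]
          exact Finset.sum_congr rfl fun i _ => by rw [Pi.neg_apply, neg_smul]
        rw [hs, hc0, neg_zero]
      · exact absurd h hci₀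
      · exact ⟨c, hc0, i₀, h⟩
    set c' : V → ℝ := fun v => if h : v ∈ s then d ⟨v, h⟩ else 0 with hc'
    have hsum0 : ∑ v ∈ s, c' v • g v = 0 := by
      rw [← Finset.sum_coe_sort s (fun v => c' v • g v)]
      rw [← hd0]
      exact Finset.sum_congr rfl fun i _ => by simp [hc', i.2]
    have hP : ((i₁ : V) ∈ s.filter fun v => 0 < c' v) := by
      simp only [Finset.mem_filter]
      exact ⟨i₁.2, by simpa [hc', i₁.2] using hdi₁⟩
    obtain ⟨v₀, hv₀P, hv₀min⟩ :=
      Finset.exists_min_image (s.filter fun v => 0 < c' v) (fun v => f v / c' v) ⟨i₁, hP⟩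
    simp only [Finset.mem_filter] at hv₀P
    obtain ⟨hv₀s, hv₀pos⟩ := hv₀P
    set T : ℝ := f v₀ / c' v₀ with hT
    have hTnn : 0 ≤ T := div_nonneg (hf v₀) hv₀pos.le
    set f' : V → ℝ := fun v => f v - T * c' v with hf'
    have hf'nn : ∀ v ∈ s, 0 ≤ f' v := by
      intro v hv
      by_cases hcv : 0 < c' v
      · have h1 := hv₀min v (Finset.mem_filter.2 ⟨hv, hcv⟩)
        have h2 : T * c' v ≤ f v := (le_div_iff₀ hcv).1 h1
        simpa [hf'] using sub_nonneg.2 h2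
      · push_neg at hcv
        have : T * c' v ≤ 0 := mul_nonpos_of_nonneg_of_nonpos hTnn hcv
        simp only [hf']
        linarith [hf v]
    have hf'v₀ : f' v₀ = 0 := by
      simp only [hf', hT]
      field_simp
      ring
    have hxf' : ∑ v ∈ s, f v • g v = ∑ v ∈ s, f' v • g v := by
      simp only [hf', sub_smul, Finset.sum_sub_distrib, mul_smul]
      rw [← Finset.smul_sum, hsum0, smul_zero, sub_zero]
    have hxmem : (∑ v ∈ s, f v • g v) ∈ fgCone (s.erase v₀) g := by
      refine ⟨fun v => if v ∈ s.erase v₀ then f' v else 0, fun v => ?_, ?_⟩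
      · by_cases h : v ∈ s.erase v₀
        · simpa [h] using hf'nn v (Finset.mem_of_mem_erase h)
        · simp [h]
      · rw [hxf', ← Finset.add_sum_erase s _ hv₀s, hf'v₀, zero_smul, zero_add]
        exact Finset.sum_congr rfl fun v hv => by simp [hv]
    obtain ⟨t, hts, hli', hmem⟩ :=
      ih (s.erase v₀) (Finset.erase_ssubset hv₀s) _ hxmem
    exact ⟨t, hts.trans (Finset.erase_subset _ _), hli', hmem⟩

end Aux

section Normed

variable {V : Type*} [AddCommGroup V] [Module ℝ V]
variable {W : Type*} [NormedAddCommGroup W] [NormedSpace ℝ W] [FiniteDimensional ℝ W]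

lemma isClosed_fgCone_of_linearIndependent (t : Finset V) (g : V → W)
    (hli : LinearIndependent ℝ (fun v : t => g v)) : IsClosed (fgCone t g) := by
  classical
  set L : (↥t → ℝ) →ₗ[ℝ] W :=
    { toFun := fun f => ∑ i : t, f i • g i
      map_add' := by intro a b; simp [add_smul, Finset.sum_add_distrib]
      map_smul' := by intro c a; simp [Finset.smul_sum, mul_smul] } with hL
  have hinj : LinearMap.ker L = ⊥ := by
    rw [LinearMap.ker_eq_bot']
    intro m hm
    have := Fintype.linearIndependent_iff.1 hli m hm
    funext i; exact this i
  have hemb : Topology.IsClosedEmbedding L := L.isClosedEmbedding_of_injective hinj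
  have himg : fgCone t g = L '' {f : ↥t → ℝ | ∀ i, 0 ≤ f i} := by
    ext y
    constructor
    · rintro ⟨f, hf, rfl⟩
      refine ⟨fun i => f i, fun i => hf i, ?_⟩
      show ∑ i : ↥t, f (i : V) • g (i : V) = _
      rw [← Finset.sum_coe_sort t (fun v => f v • g v)]
    · rintro ⟨m, hm, rfl⟩
      refine ⟨fun v => if h : v ∈ t then m ⟨v, h⟩ else 0, fun v => ?_, ?_⟩
      · by_cases h : v ∈ t
        · simpa [h] using hm ⟨v, h⟩
        · simp [h]
      · have h1 : L m = ∑ i : ↥t, m i • g (i : V) := rfl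
        rw [h1, ← Finset.sum_coe_sort t
          (fun v => (if h : v ∈ t then m ⟨v, h⟩ else 0) • g v)]
        exact Finset.sum_congr rfl fun i _ => by simp [i.2]
  rw [himg]
  refine (hemb.isClosedMap _ ?_)
  have : {f : ↥t → ℝ | ∀ i, 0 ≤ f i} = ⋂ i, {f | 0 ≤ f i} := by
    ext f; simp [Set.mem_iInter]
  rw [this]
  exact isClosed_iInter fun i => isClosed_le continuous_const (continuous_apply i)

lemma isClosed_fgCone (s : Finset V) (g : V → W) : IsClosed (fgCone s g) := by
  classical
  have hcover : fgCone s g =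
      ⋃ t ∈ {t : Finset V | t ⊆ s ∧ LinearIndependent ℝ (fun v : t => g v)},
        fgCone t g := by
    ext x
    simp only [Set.mem_iUnion, Set.mem_setOf_eq]
    constructor
    · intro hx
      obtain ⟨t, hts, hli, hmem⟩ := fgCone_caratheodory s g x hx
      exact ⟨t, ⟨hts, hli⟩, hmem⟩
    · rintro ⟨t, ⟨hts, _⟩, hmem⟩
      exact fgCone_mono hts g hmem
  rw [hcover]
  refine Set.Finite.isClosed_biUnion ?_ fun t ht => isClosed_fgCone_of_linearIndependent t g ht.2
  exact (s.powerset.finite_toSet).subset fun t ht => by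
    simpa [Finset.mem_powerset] using ht.1

/-- If a set closed under nonneg scaling, addition, and negation contains 0,
then 0 is in its intrinsic interior. -/
lemma zero_mem_intrinsicInterior_of_neg (σ : Set W) (h0 : (0 : W) ∈ σ)
    (hadd : ∀ x ∈ σ, ∀ y ∈ σ, x + y ∈ σ)
    (hsmul : ∀ c : ℝ, 0 ≤ c → ∀ x ∈ σ, c • x ∈ σ)
    (hneg : ∀ x ∈ σ, -x ∈ σ) : (0 : W) ∈ intrinsicInterior ℝ σ := by
  set U : Submodule ℝ W :=
    { carrier := σ
      add_mem' := fun ha hb => hadd _ ha _ hb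
      zero_mem' := h0
      smul_mem' := by
        intro c x hx
        rcases le_or_gt 0 c with hc | hc
        · exact hsmul c hc x hx
        · have : c • x = (-c) • (-x) := by simp
          rw [this]
          exact hsmul (-c) (by linarith) _ (hneg x hx) } with hU
  have hUσ : (U : Set W) = σ := rfl
  have hspan : affineSpan ℝ σ = U.toAffineSubspace := by
    rw [← hUσ]
    have : (U : Set W) = (U.toAffineSubspace : Set W) := rfl
    rw [this, AffineSubspace.affineSpan_coe]
  have hset : ((affineSpan ℝ σ : AffineSubspace ℝ W) : Set W) = σ := by
    rw [hspan]; rfl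
  have hpre : ((↑) ⁻¹' σ : Set (affineSpan ℝ σ)) = Set.univ := by
    ext x
    simp only [Set.mem_preimage, Set.mem_univ, iff_true]
    have hx : (x : W) ∈ ((affineSpan ℝ σ : AffineSubspace ℝ W) : Set W) := x.2
    rw [hset] at hx
    exact hx
  rw [intrinsicInterior, hpre, interior_univ, Set.image_univ]
  exact ⟨⟨0, subset_affineSpan ℝ σ h0⟩, rfl⟩

/-- If 0 is in the intrinsic interior of a cone, the cone is symmetric. -/
lemma neg_mem_of_zero_mem_intrinsicInterior (σ : Set W) (h0 : (0 : W) ∈ σ)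
    (hsmul : ∀ c : ℝ, 0 ≤ c → ∀ x ∈ σ, c • x ∈ σ)
    (h : (0 : W) ∈ intrinsicInterior ℝ σ) : ∀ y ∈ σ, -y ∈ σ := by
  intro y hy
  obtain ⟨z, hz, hz0⟩ := h
  have h0A : (0 : W) ∈ affineSpan ℝ σ := subset_affineSpan ℝ σ h0
  have hyA : y ∈ affineSpan ℝ σ := subset_affineSpan ℝ σ hy
  have hmem : ∀ t : ℝ, (-t) • y ∈ affineSpan ℝ σ := fun t => by
    simpa using AffineSubspace.smul_vsub_vadd_mem _ (-t) hyA h0A h0A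
  have hφc : Continuous
      (fun t : ℝ => (⟨(-t) • y, hmem t⟩ : ↥(affineSpan ℝ σ))) :=
    Continuous.subtype_mk (continuous_neg.smul continuous_const) _
  have hφ0 : (⟨(-(0:ℝ)) • y, hmem 0⟩ : ↥(affineSpan ℝ σ)) = z := by
    apply Subtype.ext
    show (-(0:ℝ)) • y = (z : W)
    rw [hz0]; simp
  have hnhds : (fun t : ℝ => (⟨(-t) • y, hmem t⟩ : ↥(affineSpan ℝ σ))) ⁻¹'
      (interior ((↑) ⁻¹' σ)) ∈ nhds (0 : ℝ) := by
    apply hφc.continuousAt.preimage_mem_nhds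
    apply isOpen_interior.mem_nhds
    show (⟨(-(0:ℝ)) • y, hmem 0⟩ : ↥(affineSpan ℝ σ)) ∈ interior ((↑) ⁻¹' σ)
    rw [hφ0]; exact hz
  obtain ⟨ε, hε, hball⟩ := Metric.mem_nhds_iff.1 hnhds
  have hmem2 : (⟨(-(ε/2)) • y, hmem (ε/2)⟩ : ↥(affineSpan ℝ σ)) ∈
      interior ((↑) ⁻¹' σ) := by
    apply hball
    rw [Metric.mem_ball, Real.dist_eq, sub_zero, abs_of_pos (half_pos hε)]
    exact half_lt_self hε
  have h4 := interior_subset hmem2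
  have hmem3 : (-(ε / 2)) • y ∈ σ := h4
  have heq : -y = (ε / 2)⁻¹ • ((-(ε / 2)) • y) := by
    rw [smul_smul]
    rw [inv_mul_eq_div, neg_div, div_self (by positivity : (ε / 2) ≠ 0)]
    simp
  rw [heq]
  exact hsmul _ (by positivity) _ hmem3

end Normed

/-- For a linear map `β : V → W` and a polyhedral convex cone `τ ⊆ V`,
`0` lies in the relative interior of `β(τ)` iff `τ ∩ ker β` is not contained in any
proper face of `τ`. -/
theorem zero_mem_relint_image_iff_ker_not_in_proper_face
    (V W : Type*) [NormedAddCommGroup V] [NormedSpace ℝ V] [FiniteDimensional ℝ V]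
    [NormedAddCommGroup W] [NormedSpace ℝ W] [FiniteDimensional ℝ W]
    (β : V →ₗ[ℝ] W) (s : Finset V) (τ : Set V) (hτ : τ = coneOf s) :
    (0 : W) ∈ intrinsicInterior ℝ (β '' τ) ↔
      ¬ ∃ F : Set V, IsFaceOf F τ ∧ F ≠ τ ∧ τ ∩ (LinearMap.ker β : Set V) ⊆ F := by
  have hτfg : τ = fgCone s (id : V → V) := by rw [hτ, coneOf_eq_fgCone]
  have himg : β '' τ = fgCone s ⇑β := by rw [hτ, image_coneOf]
  have hτ0 : (0 : V) ∈ τ := by rw [hτfg]; exact zero_mem_fgCone s id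
  have hτadd : ∀ x ∈ τ, ∀ y ∈ τ, x + y ∈ τ := by
    rw [hτfg]; exact fun x hx y hy => add_mem_fgCone hx hy
  have hσ0 : (0 : W) ∈ β '' τ := ⟨0, hτ0, map_zero β⟩
  have hσsmul : ∀ c : ℝ, 0 ≤ c → ∀ x ∈ β '' τ, c • x ∈ β '' τ := by
    rw [himg]; exact fun c hc x hx => smul_mem_fgCone hc hx
  have hσadd : ∀ x ∈ β '' τ, ∀ y ∈ β '' τ, x + y ∈ β '' τ := by
    rw [himg]; exact fun x hx y hy => add_mem_fgCone hx hy
  constructor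
  · rintro h0 ⟨F, ⟨l, hl, hF⟩, hFne, hker⟩
    have hneg := neg_mem_of_zero_mem_intrinsicInterior (β '' τ) hσ0 hσsmul h0
    -- find x₀ ∈ τ with l x₀ > 0
    obtain ⟨x₀, hx₀τ, hlx₀⟩ : ∃ x₀ ∈ τ, l x₀ ≠ 0 := by
      by_contra hcon
      push_neg at hcon
      apply hFne
      rw [hF]
      ext x
      simp only [Set.mem_inter_iff, Set.mem_setOf_eq]
      exact ⟨fun h => h.1, fun h => ⟨h, hcon x h⟩⟩
    have hlx₀pos : 0 < l x₀ := lt_of_le_of_ne (hl x₀ hx₀τ) (Ne.symm hlx₀)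
    obtain ⟨x₁, hx₁τ, hβx₁⟩ : ∃ x₁ ∈ τ, β x₁ = -(β x₀) :=
      hneg (β x₀) ⟨x₀, hx₀τ, rfl⟩
    have hsum : x₀ + x₁ ∈ τ ∩ (LinearMap.ker β : Set V) := by
      refine ⟨hτadd _ hx₀τ _ hx₁τ, ?_⟩
      simp [LinearMap.mem_ker, map_add, hβx₁]
    have := hker hsum
    rw [hF] at this
    have hl0 : l (x₀ + x₁) = 0 := this.2
    have hlx₁ : 0 ≤ l x₁ := hl x₁ hx₁τ
    rw [map_add] at hl0
    linarith
  · intro hno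
    -- every linear functional nonneg on the image vanishes on it
    have key : ∀ m : W →ₗ[ℝ] ℝ, (∀ y ∈ β '' τ, 0 ≤ m y) → ∀ y ∈ β '' τ, m y = 0 := by
      intro m hm
      by_contra hcon
      push_neg at hcon
      obtain ⟨y, hy, hmy⟩ := hcon
      apply hno
      refine ⟨τ ∩ {x | (m ∘ₗ β) x = 0}, ⟨m ∘ₗ β, ?_, rfl⟩, ?_, ?_⟩
      · intro x hx
        exact hm (β x) ⟨x, hx, rfl⟩
      · intro hEq
        obtain ⟨x, hxτ, rfl⟩ := hy
        have hx2 : x ∈ τ ∩ {x | (m ∘ₗ β) x = 0} := by rw [hEq]; exact hxτ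
        exact hmy hx2.2
      · rintro x ⟨hxτ, hxker⟩
        refine ⟨hxτ, ?_⟩
        have : β x = 0 := hxker
        simp [LinearMap.comp_apply, this]
    -- the image cone is symmetric
    have hneg : ∀ y ∈ β '' τ, -y ∈ β '' τ := by
      intro y hy
      by_contra hny
      have hclosed : IsClosed (β '' τ) := by rw [himg]; exact isClosed_fgCone s ⇑β
      have hconv : Convex ℝ (β '' τ) := by rw [himg]; exact convex_fgCone s ⇑β
      obtain ⟨f, u, hfu, hfb⟩ := geometric_hahn_banach_point_closed hconv hclosed hny
      have hu0 : u < 0 := by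
        have := hfb 0 hσ0
        simpa using this
      have hfnn : ∀ z ∈ β '' τ, 0 ≤ f z := by
        intro z hz
        by_contra hfz
        push_neg at hfz
        have ht : 0 < u / f z := div_pos_of_neg_of_neg hu0 hfz
        have := hfb _ (hσsmul (u / f z) ht.le z hz)
        rw [map_smul] at this
        have heq : (u / f z) • f z = u := by
          rw [smul_eq_mul, div_mul_cancel₀ _ (ne_of_lt hfz)]
        rw [heq] at this
        exact lt_irrefl u this
      have hfy : f y = 0 := key f.toLinearMap (by exact hfnn) y hy
      have : f (-y) = 0 := by rw [map_neg, hfy, neg_zero]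
      linarith
    exact zero_mem_intrinsicInterior_of_neg (β '' τ) hσ0 hσadd hσsmul hneg
end

section
/- Let β : N → L be a ℤ-linear map of lattices and let τ ⊆ N ⊗ ℝ be a rational polyhedral cone. Then the subgroup ℤ(L ∩ β_ℝ(τ)) of L generated by the lattice points of the image cone β_ℝ(τ) equals the saturation of β(ℤ(N ∩ τ)) in L, i.e., equals { x ∈ L : n·x ∈ β(ℤ(N ∩ τ)) for some nonzero integer n }. -/
/-- The embedding of the lattice `ℤⁿ` into `ℝⁿ`. -/
def latticeToReal {n : ℕ} (v : Fin n → ℤ) : Fin n → ℝ := fun i => (v i : ℝ)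

/-- The rational polyhedral cone generated by a finite set `s` of lattice points. -/
def intCone {n : ℕ} (s : Finset (Fin n → ℤ)) : Set (Fin n → ℝ) :=
  {x | ∃ f : (Fin n → ℤ) → ℝ, (∀ v, 0 ≤ f v) ∧ x = ∑ v ∈ s, f v • latticeToReal v}

namespace SatAux

variable {k : ℕ}

def latticeToRat {k : ℕ} (v : Fin k → ℤ) : Fin k → ℚ := fun i => (v i : ℚ)

lemma ltr_add (a b : Fin k → ℤ) :
    latticeToReal (a + b) = latticeToReal a + latticeToReal b := by
  funext i; simp [latticeToReal]

lemma ltr_smul (c : ℤ) (a : Fin k → ℤ) :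
    latticeToReal (c • a) = (c : ℝ) • latticeToReal a := by
  funext i; simp [latticeToReal]

lemma ltr_sum {ι : Type*} (t : Finset ι) (g : ι → Fin k → ℤ) :
    latticeToReal (∑ i ∈ t, g i) = ∑ i ∈ t, latticeToReal (g i) := by
  funext j; simp [latticeToReal, Finset.sum_apply]


lemma ltq_inj : Function.Injective (latticeToRat (k := k)) := by
  intro a b h
  funext i
  have := congrFun h i
  simpa [latticeToRat] using this

lemma ltq_smul (c : ℤ) (a : Fin k → ℤ) :
    latticeToRat (c • a) = (c : ℚ) • latticeToRat a := by
  funext i; simp [latticeToRat]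

lemma ltq_sum {ι : Type*} (t : Finset ι) (g : ι → Fin k → ℤ) :
    latticeToRat (∑ i ∈ t, g i) = ∑ i ∈ t, latticeToRat (g i) := by
  funext j; simp [latticeToRat, Finset.sum_apply]

/-- The saturation of a subgroup of `ℤᵏ`, as a submodule. -/
def sat (P : Submodule ℤ (Fin k → ℤ)) : Submodule ℤ (Fin k → ℤ) where
  carrier := {y | ∃ c : ℤ, c ≠ 0 ∧ c • y ∈ P}
  zero_mem' := ⟨1, one_ne_zero, by simp⟩
  add_mem' := by
    rintro a b ⟨c, hc, hca⟩ ⟨d, hd, hdb⟩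
    refine ⟨c * d, mul_ne_zero hc hd, ?_⟩
    rw [smul_add]
    refine Submodule.add_mem P ?_ ?_
    · rw [mul_comm, mul_smul]; exact P.smul_mem d hca
    · rw [mul_smul]; exact P.smul_mem c hdb
  smul_mem' := by
    rintro c x ⟨d, hd, hdx⟩
    exact ⟨d, hd, by rw [smul_comm]; exact P.smul_mem c hdx⟩

lemma mem_sat {P : Submodule ℤ (Fin k → ℤ)} {y : Fin k → ℤ} :
    y ∈ sat P ↔ ∃ c : ℤ, c ≠ 0 ∧ c • y ∈ P := Iff.rfl

/-- Rational descent: a lattice point in the real span of a finite set of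
lattice points has a nonzero multiple in the integer span. -/
lemma descent (S : Finset (Fin k → ℤ)) (y : Fin k → ℤ)
    (h : latticeToReal y ∈ Submodule.span ℝ (latticeToReal '' (S : Set (Fin k → ℤ)))) :
    ∃ c : ℤ, c ≠ 0 ∧ c • y ∈ Submodule.span ℤ (S : Set (Fin k → ℤ)) := by
  classical
  -- Step A: descent from ℝ to ℚ
  have hq : latticeToRat y ∈ Submodule.span ℚ (latticeToRat '' (S : Set (Fin k → ℤ))) := by
    by_contra hy
    obtain ⟨f, hfne, hker⟩ :=
      Submodule.exists_dual_map_eq_bot_of_notMem hy inferInstance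
    set c : Fin k → ℚ := fun i => f (fun j => if i = j then 1 else 0) with hc
    have hf_eq : ∀ x : Fin k → ℚ, f x = ∑ i, x i * c i := by
      intro x
      conv_lhs => rw [pi_eq_sum_univ x, map_sum]
      refine Finset.sum_congr rfl fun i _ => ?_
      rw [map_smul, smul_eq_mul, hc]
    set ψ : (Fin k → ℝ) →ₗ[ℝ] ℝ := ∑ i, (c i : ℝ) • LinearMap.proj i with hψdef
    have hψ : ∀ v : Fin k → ℤ, ψ (latticeToReal v) = ((f (latticeToRat v) : ℚ) : ℝ) := by
      intro v
      rw [hf_eq]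
      push_cast
      simp only [hψdef, latticeToReal, latticeToRat, LinearMap.sum_apply,
        LinearMap.smul_apply, LinearMap.proj_apply, smul_eq_mul]
      exact Finset.sum_congr rfl fun i _ => mul_comm _ _
    have hspan : Submodule.span ℝ (latticeToReal '' (S : Set (Fin k → ℤ))) ≤
        LinearMap.ker ψ := by
      rw [Submodule.span_le]
      rintro _ ⟨v, hv, rfl⟩
      have hfv : f (latticeToRat v) = 0 := by
        have : f (latticeToRat v) ∈
            Submodule.map f (Submodule.span ℚ (latticeToRat '' (S : Set (Fin k → ℤ)))) :=
          ⟨latticeToRat v, Submodule.subset_span ⟨v, hv, rfl⟩, rfl⟩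
        rwa [hker, Submodule.mem_bot] at this
      simp [LinearMap.mem_ker, hψ v, hfv]
    have : ψ (latticeToReal y) = 0 := hspan h
    rw [hψ y] at this
    exact hfne (by exact_mod_cast this)
  -- Step B: clear denominators
  have himg : latticeToRat '' (S : Set (Fin k → ℤ)) =
      ((S.image latticeToRat : Finset (Fin k → ℚ)) : Set (Fin k → ℚ)) := by
    simp
  rw [himg] at hq
  obtain ⟨g, -, hg⟩ := Submodule.mem_span_finset.mp hq
  set b : (Fin k → ℤ) → ℚ := fun v => g (latticeToRat v) with hb
  have hrep : ∑ v ∈ S, b v • latticeToRat v = latticeToRat y := by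
    rw [← hg, Finset.sum_image]
    intro x hx y hy hxy
    exact funext fun i => by
      have := congrFun hxy i
      simpa [latticeToRat] using this
  set D : ℤ := ∏ v ∈ S, ((b v).den : ℤ) with hD
  have hDpos : 0 < D := Finset.prod_pos fun v _ => by positivity
  set a : (Fin k → ℤ) → ℤ :=
    fun v => (∏ u ∈ S.erase v, ((b u).den : ℤ)) * (b v).num with ha
  have hav : ∀ v ∈ S, ((a v : ℚ)) = (D : ℚ) * b v := by
    intro v hv
    have h1 : (∏ u ∈ S.erase v, ((b u).den : ℤ)) * ((b v).den : ℤ) = D := by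
      rw [hD]
      exact Finset.prod_erase_mul S _ hv
    have h2 : ((b v).num : ℚ) = b v * (b v).den := (Rat.mul_den_eq_num (b v)).symm
    rw [ha]
    push_cast
    rw [h2, ← h1]
    push_cast
    ring
  refine ⟨D, hDpos.ne', ?_⟩
  have key : D • y = ∑ v ∈ S, a v • v := by
    apply ltq_inj
    rw [ltq_smul, ltq_sum]
    rw [← hrep, Finset.smul_sum]
    refine Finset.sum_congr rfl fun v hv => ?_
    rw [ltq_smul]
    rw [smul_smul, hav v hv]
  rw [key]
  exact Submodule.sum_mem _ fun v hv =>
    Submodule.smul_mem _ _ (Submodule.subset_span hv)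


lemma mem_cone_of_mem (s : Finset (Fin k → ℤ)) {v : Fin k → ℤ} (hv : v ∈ s) :
    latticeToReal v ∈ intCone s := by
  classical
  refine ⟨fun u => if u = v then 1 else 0, fun u => by positivity, ?_⟩
  symm
  simp only [ite_smul, one_smul, zero_smul]
  rw [Finset.sum_ite_eq' s v (fun u => latticeToReal u)]
  simp [hv]

lemma cone_subset_spanR (s : Finset (Fin k → ℤ)) {x : Fin k → ℝ} (hx : x ∈ intCone s) :
    x ∈ Submodule.span ℝ (latticeToReal '' (s : Set (Fin k → ℤ))) := by
  obtain ⟨f, hf, rfl⟩ := hx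
  exact Submodule.sum_mem _ fun v hv =>
    Submodule.smul_mem _ _ (Submodule.subset_span ⟨v, hv, rfl⟩)

end SatAux

open SatAux

/-- For a ℤ-linear map `β : N → L` of lattices and a rational
polyhedral cone `τ ⊆ N ⊗ ℝ`, the subgroup `ℤ(L ∩ β_ℝ(τ))` of `L` generated by the
lattice points of the image cone equals the saturation of `β(ℤ(N ∩ τ))` in `L`. -/
theorem span_latticePoints_image_cone_eq_saturation
    (n m : ℕ) (β : (Fin n → ℤ) →ₗ[ℤ] (Fin m → ℤ))
    (βR : (Fin n → ℝ) →ₗ[ℝ] (Fin m → ℝ))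
    (hcompat : ∀ v : Fin n → ℤ, βR (latticeToReal v) = latticeToReal (β v))
    (s : Finset (Fin n → ℤ)) (τ : Set (Fin n → ℝ)) (hτ : τ = intCone s) :
    ((Submodule.span ℤ {y : Fin m → ℤ | latticeToReal y ∈ βR '' τ} :
        Submodule ℤ (Fin m → ℤ)) : Set (Fin m → ℤ)) =
      {y : Fin m → ℤ | ∃ k : ℤ, k ≠ 0 ∧
        k • y ∈ Submodule.map β
          (Submodule.span ℤ {x : Fin n → ℤ | latticeToReal x ∈ τ})} := by
  classical
  subst hτ
  apply Set.Subset.antisymm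
  · -- span of lattice points of image cone ⊆ saturation
    have h1 : Submodule.span ℤ {y : Fin m → ℤ | latticeToReal y ∈ βR '' intCone s} ≤
        sat (Submodule.map β
          (Submodule.span ℤ {x : Fin n → ℤ | latticeToReal x ∈ intCone s})) := by
      rw [Submodule.span_le]
      rintro y hy
      obtain ⟨x, ⟨f, hf, rfl⟩, hx⟩ := hy
      have hmem : latticeToReal y ∈ Submodule.span ℝ
          (latticeToReal '' ((s.image β : Finset (Fin m → ℤ)) : Set (Fin m → ℤ))) := by
        rw [← hx, map_sum]
        refine Submodule.sum_mem _ fun v hv => ?_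
        rw [map_smul, hcompat]
        exact Submodule.smul_mem _ _ (Submodule.subset_span
          ⟨β v, Finset.mem_coe.2 (Finset.mem_image_of_mem β hv), rfl⟩)
      obtain ⟨c, hc, hcy⟩ := descent (s.image β) y hmem
      refine ⟨c, hc, ?_⟩
      have h2 : Submodule.span ℤ ((s.image β : Finset (Fin m → ℤ)) : Set (Fin m → ℤ)) ≤
          Submodule.map β
            (Submodule.span ℤ {x : Fin n → ℤ | latticeToReal x ∈ intCone s}) := by
        rw [Finset.coe_image, Submodule.span_image]
        exact Submodule.map_mono (Submodule.span_mono fun v hv =>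
          mem_cone_of_mem s hv)
      exact h2 hcy
    intro y hy
    exact h1 hy
  · -- saturation ⊆ span of lattice points of image cone
    rintro y ⟨c, hc, hm⟩
    obtain ⟨x, hx, hbx⟩ := hm
    -- x is in the saturation of span s
    have hxs : x ∈ sat (Submodule.span ℤ (s : Set (Fin n → ℤ))) := by
      have h3 : Submodule.span ℤ {x : Fin n → ℤ | latticeToReal x ∈ intCone s} ≤
          sat (Submodule.span ℤ (s : Set (Fin n → ℤ))) := by
        rw [Submodule.span_le]
        intro x' hx'
        exact descent s x' (cone_subset_spanR s hx')
      exact h3 hx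
    obtain ⟨d, hd, hdx⟩ := hxs
    obtain ⟨b, -, hb⟩ := Submodule.mem_span_finset.mp hdx
    have hKy : (d * c) • y = ∑ v ∈ s, b v • β v := by
      rw [mul_smul, ← hbx, ← map_smul, ← hb, map_sum]
      exact Finset.sum_congr rfl fun v _ => (map_smul β (b v) v)
    -- wlog the multiplier is positive
    obtain ⟨K, b', hKpos, hK'⟩ : ∃ (K : ℤ) (b' : (Fin n → ℤ) → ℤ), 0 < K ∧
        K • y = ∑ v ∈ s, b' v • β v := by
      rcases (mul_ne_zero hd hc).lt_or_gt with hneg | hpos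
      · refine ⟨-(d * c), fun v => -(b v), by omega, ?_⟩
        rw [neg_smul, hKy, ← Finset.sum_neg_distrib]
        exact Finset.sum_congr rfl fun v _ => (neg_smul (b v) (β v)).symm
      · exact ⟨d * c, b, hpos, hKy⟩
    set M : ℤ := ∑ v ∈ s, |b' v| with hM
    have hMv : ∀ v ∈ s, |b' v| ≤ M :=
      fun v hv => Finset.single_le_sum (fun u _ => abs_nonneg (b' u)) hv
    set w0 : Fin m → ℤ := ∑ v ∈ s, β v with hw0def
    have hw0ltr : latticeToReal w0 = ∑ v ∈ s, latticeToReal (β v) := by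
      rw [hw0def, ltr_sum]
    have hw0 : w0 ∈ {y : Fin m → ℤ | latticeToReal y ∈ βR '' intCone s} := by
      refine ⟨∑ v ∈ s, latticeToReal v, ⟨fun _ => 1, fun _ => zero_le_one, by simp⟩, ?_⟩
      rw [map_sum, hw0ltr]
      exact Finset.sum_congr rfl fun v _ => hcompat v
    have hyM : y + M • w0 ∈ {y : Fin m → ℤ | latticeToReal y ∈ βR '' intCone s} := by
      set F : (Fin n → ℤ) → ℝ :=
        fun v => if v ∈ s then ((b' v : ℝ) / (K : ℝ) + (M : ℝ)) else 0 with hF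
      have hKR : (0 : ℝ) < (K : ℝ) := by exact_mod_cast hKpos
      have hKR1 : (1 : ℝ) ≤ (K : ℝ) := by exact_mod_cast hKpos
      have hF0 : ∀ v, 0 ≤ F v := by
        intro v
        simp only [hF]
        by_cases hv : v ∈ s
        · rw [if_pos hv]
          have h1 : (|b' v| : ℝ) ≤ (M : ℝ) := by exact_mod_cast hMv v hv
          have h2 : -(|b' v| : ℝ) ≤ (b' v : ℝ) / (K : ℝ) := by
            rw [le_div_iff₀ hKR]
            have ha : -(|b' v| : ℝ) ≤ 0 := neg_nonpos_of_nonneg (abs_nonneg _)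
            have hb2 : -(|b' v| : ℝ) * (K : ℝ) ≤ -(|b' v| : ℝ) * 1 :=
              mul_le_mul_of_nonpos_left hKR1 ha
            have hc2 : -(|b' v| : ℝ) ≤ (b' v : ℝ) := by
              exact_mod_cast neg_abs_le (b' v)
            nlinarith
          linarith
        · rw [if_neg hv]
      have hKne : (K : ℝ) ≠ 0 := hKR.ne'
      have hyr : latticeToReal y
          = ∑ v ∈ s, ((b' v : ℝ) / (K : ℝ)) • latticeToReal (β v) := by
        have h4 : (K : ℝ) • latticeToReal y
            = ∑ v ∈ s, (b' v : ℝ) • latticeToReal (β v) := by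
          rw [← ltr_smul, hK', ltr_sum]
          exact Finset.sum_congr rfl fun v _ => ltr_smul (b' v) (β v)
        calc latticeToReal y = (K : ℝ)⁻¹ • ((K : ℝ) • latticeToReal y) := by
              rw [smul_smul, inv_mul_cancel₀ hKne, one_smul]
          _ = ∑ v ∈ s, ((b' v : ℝ) / (K : ℝ)) • latticeToReal (β v) := by
              rw [h4, Finset.smul_sum]
              exact Finset.sum_congr rfl fun v _ => by
                rw [smul_smul, ← div_eq_inv_mul]
      refine ⟨∑ v ∈ s, F v • latticeToReal v, ⟨F, hF0, rfl⟩, ?_⟩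
      have hL : ∑ v ∈ s, βR (F v • latticeToReal v)
          = ∑ v ∈ s, (((b' v : ℝ) / (K : ℝ)) • latticeToReal (β v)
              + (M : ℝ) • latticeToReal (β v)) := by
        refine Finset.sum_congr rfl fun v hv => ?_
        rw [map_smul, hcompat]
        simp only [hF]
        rw [if_pos hv, add_smul]
      rw [map_sum, hL, Finset.sum_add_distrib, ltr_add, ltr_smul, hw0ltr, ← hyr,
        Finset.smul_sum]
    have hy_eq : y = (y + M • w0) - M • w0 := by abel
    rw [SetLike.mem_coe, hy_eq]
    exact Submodule.sub_mem _ (Submodule.subset_span hyM)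
      (Submodule.smul_mem _ M (Submodule.subset_span hw0))
end
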